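/- arXiv:2310.00676 — 4 statements merged into one kernel-verified Lean document; each statement's English description precedes it below -/
import Mathlib

section
/- Let $p$ be an odd prime and $i$ a nonzero integer with $(p-1) \mid i$, and write $v = v_p(i)$ for the $p$-adic valuation of $i$. For every integer $n \geq v+2$, the set $\{x \in \mathbf{Z}/p^n\mathbf{Z} : u^i \cdot x = x \text{ for all } u \in (\mathbf{Z}/p^n\mathbf{Z})^\times\}$ equals the subgroup $p^{n-v-1}\,\mathbf{Z}/p^n\mathbf{Z}$ (the set of multiples of $p^{n-v-1}$), and in particular has exactly $p^{v+1}$ elements. -/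
/-!
Replacing `u` by `u⁻¹` reduces the exponent `i` to `j = |i|`. Writing `j = (p - 1) m`, Fermat
and the lifting-the-exponent lemma applied to `(a ^ (p - 1)) ^ m - 1` show that `p ^ (v + 1)`
divides `a ^ j - 1` for every `a` prime to `p`, and LTE for `(1 + p) ^ j - 1` shows that this
power is attained, up to a unit. So `x` is fixed by every `u ^ j` exactly when
`p ^ (v + 1) * x = 0`, i.e. when `x` lies in the cyclic subgroup generated by `p ^ (n - v - 1)`,
which has order `p ^ (v + 1)`.
-/

theorem Units.forall_zpow_mul_eq_self_iff {M : Type*} [Monoid M] (i : ℤ) (x : M) :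
    (∀ u : Mˣ, ((u ^ i : Mˣ) : M) * x = x) ↔ ∀ u : Mˣ, (u : M) ^ i.natAbs * x = x := by
  rcases Int.natAbs_eq i with hi | hi <;> rw [hi]
  · simp only [zpow_natCast, Units.val_pow_eq_pow_val, Int.natAbs_natCast]
  · simp only [zpow_neg, zpow_natCast, Int.natAbs_neg, Int.natAbs_natCast]
    exact ⟨fun h u => by simpa using h u⁻¹, fun h u => by simpa using h u⁻¹⟩

theorem Nat.pow_padicValNat_succ_dvd_pow_sub_one {p a j : ℕ} [hp : Fact p.Prime] (hodd : Odd p)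
    (ha : ¬p ∣ a) (hj : p - 1 ∣ j) : p ^ (padicValNat p j + 1) ∣ a ^ j - 1 := by
  obtain ⟨m, rfl⟩ := hj
  have hfermat : p ∣ a ^ (p - 1) - 1 := by
    have h := Nat.ModEq.pow_totient (Nat.coprime_comm.mp (hp.out.coprime_iff_not_dvd.mpr ha))
    rw [Nat.totient_prime hp.out] at h
    exact h.symm.dvd'
  have hm : p ^ padicValNat p ((p - 1) * m) ∣ m :=
    (((Nat.coprime_self_sub_left hp.out.one_le).mpr (Nat.coprime_one_left p)).pow_right _).symm
      |>.dvd_of_dvd_mul_left pow_padicValNat_dvd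
  apply pow_dvd_of_le_emultiplicity
  have hpow : a ^ ((p - 1) * m) - 1 = (a ^ (p - 1)) ^ m - 1 ^ m := by rw [pow_mul, one_pow]
  rw [hpow, Nat.emultiplicity_pow_sub_pow hp.out hodd hfermat
    (fun h => ha (hp.out.dvd_of_dvd_pow h)) m, Nat.cast_add, add_comm, Nat.cast_one]
  have h1 : (1 : ℕ∞) ≤ emultiplicity p (a ^ (p - 1) - 1) := by
    simpa using le_emultiplicity_of_pow_dvd (k := 1) (by rwa [pow_one])
  have h2 : (padicValNat p ((p - 1) * m) : ℕ∞) ≤ emultiplicity p m :=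
    le_emultiplicity_of_pow_dvd hm
  gcongr

theorem Nat.exists_one_add_pow_sub_one_eq {p j : ℕ} [hp : Fact p.Prime] (hodd : Odd p)
    (hj : j ≠ 0) : ∃ c, (1 + p) ^ j - 1 = p ^ (padicValNat p j + 1) * c ∧ ¬p ∣ c := by
  have hval : padicValNat p ((1 + p) ^ j - 1) = padicValNat p j + 1 := by
    have h := padicValNat.pow_sub_pow (x := 1 + p) (y := 1) hodd (by simpa using hp.out.pos)
      (by simp) (by simpa [Nat.dvd_add_left] using hp.out.not_dvd_one) hj
    rw [one_pow, add_tsub_cancel_left, padicValNat_self] at h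
    omega
  obtain ⟨c, hc⟩ := hval ▸ pow_padicValNat_dvd (p := p) (n := (1 + p) ^ j - 1)
  refine ⟨c, hc, fun ⟨d, hd⟩ =>
    pow_succ_padicValNat_not_dvd (p := p) (n := (1 + p) ^ j - 1) ?_ ?_⟩
  · exact Nat.sub_ne_zero_of_lt (Nat.one_lt_pow hj (Nat.lt_add_of_pos_right hp.out.pos))
  · exact hval ▸ ⟨d, by rw [hc, hd]; ring⟩

namespace ZMod

theorem natCast_mul_eq_zero_iff_dvd {m d e : ℕ} (hd : d ≠ 0) (hde : d * e = m) (x : ZMod m) :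
    (d : ZMod m) * x = 0 ↔ (e : ZMod m) ∣ x := by
  constructor
  · intro h
    obtain ⟨X, rfl⟩ := intCast_surjective x
    have hdvd : ((d * e : ℕ) : ℤ) ∣ d * X := by
      rw [← intCast_zmod_eq_zero_iff_dvd, hde]
      push_cast
      exact h
    push_cast at hdvd
    simpa using Int.cast_dvd_cast _ _ ((mul_dvd_mul_iff_left (by exact_mod_cast hd)).mp hdvd)
  · rintro ⟨c, rfl⟩
    rw [← mul_assoc, ← Nat.cast_mul, hde, natCast_self, zero_mul]

theorem card_setOf_natCast_dvd {m d : ℕ} [NeZero m] (hd : d ∣ m) :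
    Nat.card {x : ZMod m | (d : ZMod m) ∣ x} = m / d := by
  have hmul : {x : ZMod m | (d : ZMod m) ∣ x} = AddSubgroup.zmultiples (d : ZMod m) := by
    ext x
    simp only [Set.mem_ofPred_eq, SetLike.mem_coe, AddSubgroup.mem_zmultiples_iff, zsmul_eq_mul]
    constructor
    · rintro ⟨c, rfl⟩
      obtain ⟨k, rfl⟩ := intCast_surjective c
      exact ⟨k, mul_comm _ _⟩
    · rintro ⟨k, rfl⟩
      exact Dvd.intro_left _ rfl
  rw [hmul, SetLike.coe_sort_coe, Nat.card_zmultiples, addOrderOf_coe _ (NeZero.ne m),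
    Nat.gcd_eq_right hd]

theorem forall_units_pow_mul_eq_self_iff {p n j : ℕ} [hp : Fact p.Prime] (hodd : Odd p)
    (hn : n ≠ 0) (hj : j ≠ 0) (hpj : p - 1 ∣ j) (x : ZMod (p ^ n)) :
    (∀ u : (ZMod (p ^ n))ˣ, (u : ZMod (p ^ n)) ^ j * x = x) ↔
      (p : ZMod (p ^ n)) ^ (padicValNat p j + 1) * x = 0 := by
  have hunit_iff (a : ℕ) : IsUnit (a : ZMod (p ^ n)) ↔ ¬p ∣ a :=
    isUnit_natCast_iff_not_dvd_pow hp.out (Nat.pos_of_ne_zero hn)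
  constructor
  · intro h
    obtain ⟨c, hc, hpc⟩ := Nat.exists_one_add_pow_sub_one_eq hodd hj
    have hunit : IsUnit ((1 + p : ℕ) : ZMod (p ^ n)) :=
      (hunit_iff _).mpr (by simpa [Nat.dvd_add_left] using hp.out.not_dvd_one)
    have hfix : (1 + (p : ZMod (p ^ n))) ^ j * x = x := by simpa using h hunit.unit
    have hcast := congrArg (Nat.cast : ℕ → ZMod (p ^ n)) hc
    rw [Nat.cast_sub (Nat.one_le_pow _ _ (by omega))] at hcast
    push_cast at hcast
    rw [← ((hunit_iff c).mpr hpc).mul_left_eq_zero]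
    linear_combination hfix - x * hcast
  · intro h u
    have hu : ¬p ∣ (u : ZMod (p ^ n)).val := by
      rw [← hunit_iff, natCast_zmod_val]
      exact u.isUnit
    obtain ⟨t, ht⟩ := Nat.pow_padicValNat_succ_dvd_pow_sub_one hodd hu hpj
    have hcast := congrArg (Nat.cast : ℕ → ZMod (p ^ n)) ht
    have hpos : 0 < (u : ZMod (p ^ n)).val := Nat.pos_of_ne_zero (by rintro h0; simp [h0] at hu)
    rw [Nat.cast_sub (Nat.one_le_pow _ _ hpos)] at hcast
    push_cast [natCast_zmod_val] at hcast
    linear_combination x * hcast + t * h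

end ZMod

/-- For `p` an odd prime, `i ≠ 0` with `(p-1) ∣ i`, `v = v_p(i)`, and `n ≥ v + 2`:
the set of `x ∈ ℤ/pⁿℤ` fixed by multiplication by `u^i` for all units `u` is exactly
the set of multiples of `p^(n-v-1)`, and it has exactly `p^(v+1)` elements. -/
theorem stmt_1 (p : ℕ) (hp : p.Prime) (hodd : Odd p) (i : ℤ) (hi : i ≠ 0)
    (hdvd : ((p : ℤ) - 1) ∣ i) (v : ℕ) (hv : v = padicValInt p i)
    (n : ℕ) (hn : v + 2 ≤ n) :
    {x : ZMod (p ^ n) |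
        ∀ u : (ZMod (p ^ n))ˣ, ((u ^ i : (ZMod (p ^ n))ˣ) : ZMod (p ^ n)) * x = x}
      = {x : ZMod (p ^ n) | ((p : ZMod (p ^ n)) ^ (n - v - 1)) ∣ x} ∧
    Nat.card {x : ZMod (p ^ n) |
        ∀ u : (ZMod (p ^ n))ˣ, ((u ^ i : (ZMod (p ^ n))ˣ) : ZMod (p ^ n)) * x = x}
      = p ^ (v + 1) := by
  have : Fact p.Prime := ⟨hp⟩
  have hpi : p - 1 ∣ i.natAbs := by
    rw [← Int.natCast_dvd, Nat.cast_sub hp.one_le, Nat.cast_one]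
    exact hdvd
  have hfixed : {x : ZMod (p ^ n) |
        ∀ u : (ZMod (p ^ n))ˣ, ((u ^ i : (ZMod (p ^ n))ˣ) : ZMod (p ^ n)) * x = x}
      = {x : ZMod (p ^ n) | ((p : ZMod (p ^ n)) ^ (n - v - 1)) ∣ x} := by
    ext x
    rw [Set.mem_ofPred_eq, Set.mem_ofPred_eq, Units.forall_zpow_mul_eq_self_iff,
      ZMod.forall_units_pow_mul_eq_self_iff hodd (by omega) (Int.natAbs_ne_zero.mpr hi) hpi,
      ← padicValInt, ← hv, ← Nat.cast_pow, ← Nat.cast_pow]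
    exact ZMod.natCast_mul_eq_zero_iff_dvd (pow_ne_zero _ hp.ne_zero)
      (by rw [← pow_add]; congr 1; omega) x
  refine ⟨hfixed, ?_⟩
  rw [hfixed, ← Nat.cast_pow, ZMod.card_setOf_natCast_dvd (pow_dvd_pow p (by omega)),
    Nat.pow_div (by omega) hp.pos]
  congr 1
  omega
end

section
/- Let $p$ be a prime, $n \geq 1$ an integer, $R = (\mathbf{Z}/p^n\mathbf{Z})[X]$, and let $g \in R$ be a monic polynomial whose reduction modulo $p$ is irreducible in $\mathbf{F}_p[X]$. Consider the localization $R[1/g]$ of $R$ away from $g$ and the quotient $R$-module $E = R[1/g]/R$ (the cokernel of the localization map $R \to R[1/g]$). Then $E$ is an injective $R$-module, and every element of $E$ is annihilated by a positive power of $g$. -/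
/-!
Baer's criterion. Let `R = A[X]` with `A = ℤ/pⁿ`, and `E = R[1/g]/R`. A map `f : I → E` on an ideal
has finitely generated image, hence is killed by some `g ^ N`, and by Artin–Rees it then vanishes
on `I ∩ (g ^ M)` for a suitable `M ≥ N`. The `g ^ M`-torsion of `E` is `B = R/(g ^ M)`, so `f` is an
`R`-linear map `φ : I → B` vanishing on `I ∩ (g ^ M)`. As `g ^ M` is monic of degree `d`, `B` is free
over `A` on `1, X, …, X^(d-1)`, and the coefficient of `X^(d-1)` is a form `λ` for which
`(b, c) ↦ λ (b * c)` is a perfect pairing. Since `A` is self-injective (in `ℤ/m` every ideal is its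
double annihilator), `λ ∘ φ` extends to `B`, the extension is `λ (e * -)`, and perfectness of the
pairing forces `φ` to be multiplication by `e`.
-/

open Polynomial

universe u

instance ZMod.isPrincipalIdealRing (m : ℕ) : IsPrincipalIdealRing (ZMod m) :=
  .of_surjective (Int.castRingHom (ZMod m)) ZMod.intCast_surjective

theorem Module.Baer.self_of_isPrincipalIdealRing {R : Type*} [CommRing R]
    [IsPrincipalIdealRing R] (h : ∀ d c : R, (∀ r, r * d = 0 → r * c = 0) → d ∣ c) :
    Module.Baer R R := by
  intro I f
  let d := Submodule.IsPrincipal.generator I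
  have hd : d ∈ I := Submodule.IsPrincipal.generator_mem I
  obtain ⟨e, he⟩ := h d (f ⟨d, hd⟩) fun r hr => by
    have hrd : r • (⟨d, hd⟩ : I) = 0 := Subtype.ext hr
    rw [← smul_eq_mul, ← map_smul, hrd, map_zero]
  refine ⟨LinearMap.toSpanSingleton R R e, fun x hx => ?_⟩
  obtain ⟨a, rfl⟩ := (Submodule.IsPrincipal.mem_iff_eq_smul_generator I).mp hx
  have hax : (⟨a • d, hx⟩ : I) = a • ⟨d, hd⟩ := rfl
  rw [hax, map_smul f, he, LinearMap.toSpanSingleton_apply, smul_eq_mul, smul_eq_mul, smul_eq_mul,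
    mul_assoc]

theorem ZMod.dvd_of_annihilator_le {m : ℕ} [NeZero m] {d c : ZMod m}
    (h : ∀ r, r * d = 0 → r * c = 0) : d ∣ c := by
  set G := d.val.gcd m
  have hG : G ∣ m := Nat.gcd_dvd_right _ _
  have hmG : 0 < m / G :=
    Nat.div_pos (Nat.le_of_dvd (NeZero.pos m) hG) (Nat.gcd_pos_of_pos_right _ (NeZero.pos m))
  have key (x : ZMod m) : ((m / G : ℕ) : ZMod m) * x = 0 ↔ G ∣ x.val := by
    have := Nat.mul_dvd_mul_iff_left (b := G) (c := x.val) hmG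
    rwa [Nat.div_mul_cancel hG, ← ZMod.natCast_eq_zero_iff, Nat.cast_mul,
      ZMod.natCast_zmod_val] at this
  obtain ⟨t, ht⟩ := (key c).mp (h _ ((key d).mpr (Nat.gcd_dvd_left _ _)))
  refine ⟨d⁻¹ * t, ?_⟩
  rw [← mul_assoc, ZMod.mul_inv_eq_gcd, ← Nat.cast_mul, ← ht, ZMod.natCast_zmod_val]

instance ZMod.injective_self (m : ℕ) [NeZero m] : Module.Injective (ZMod m) (ZMod m) :=
  (Module.Baer.self_of_isPrincipalIdealRing fun _ _ => ZMod.dvd_of_annihilator_le).injective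

theorem Module.Injective.exists_comp_eq_of_ker_le {A : Type*} [Ring A] {Q X Y : Type u}
    [AddCommGroup Q] [AddCommGroup X] [AddCommGroup Y] [Module A Q] [Module A X] [Module A Y]
    [Module.Injective A Q] (f : X →ₗ[A] Y) (g : X →ₗ[A] Q)
    (hfg : LinearMap.ker f ≤ LinearMap.ker g) : ∃ h : Y →ₗ[A] Q, h ∘ₗ f = g := by
  obtain ⟨h, hh⟩ := Module.Injective.out ((LinearMap.ker f).liftQ f le_rfl)
    (LinearMap.ker_eq_bot.mp (Submodule.ker_liftQ_eq_bot _ _ _ le_rfl))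
    ((LinearMap.ker f).liftQ g hfg)
  exact ⟨h, LinearMap.ext fun x => hh (Submodule.Quotient.mk x)⟩

theorem LinearMap.exists_comp_eq_of_range_le {R M N Q : Type*} [Ring R] [AddCommGroup M]
    [AddCommGroup N] [AddCommGroup Q] [Module R M] [Module R N] [Module R Q] {ρ : N →ₗ[R] Q}
    (hρ : Function.Injective ρ) {f : M →ₗ[R] Q} (hf : range f ≤ range ρ) :
    ∃ φ : M →ₗ[R] N, ρ ∘ₗ φ = f :=
  ⟨(LinearEquiv.ofInjective ρ hρ).symm.toLinearMap ∘ₗ f.codRestrict _ fun x => hf ⟨x, rfl⟩,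
    by ext x; simp⟩

theorem Submodule.FG.exists_pow_smul_eq_zero {R M : Type*} [CommSemiring R] [AddCommMonoid M]
    [Module R M] {N : Submodule R M} (hN : N.FG) {g : R} (h : ∀ x ∈ N, ∃ k, g ^ k • x = 0) :
    ∃ k, ∀ x ∈ N, g ^ k • x = 0 := by
  induction N, hN using Submodule.fg_induction with
  | singleton x =>
    obtain ⟨k, hk⟩ := h x (Submodule.mem_span_singleton_self x)
    refine ⟨k, fun y hy => ?_⟩
    obtain ⟨r, rfl⟩ := Submodule.mem_span_singleton.mp hy
    rw [smul_comm, hk, smul_zero]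
  | sup N₁ N₂ _ _ ih₁ ih₂ =>
    obtain ⟨k₁, hk₁⟩ := ih₁ fun x hx => h x (Submodule.mem_sup_left hx)
    obtain ⟨k₂, hk₂⟩ := ih₂ fun x hx => h x (Submodule.mem_sup_right hx)
    refine ⟨k₁ + k₂, fun x hx => ?_⟩
    obtain ⟨y, hy, z, hz, rfl⟩ := Submodule.mem_sup.mp hx
    have hy' : g ^ (k₁ + k₂) • y = 0 := by rw [pow_add, mul_comm, mul_smul, hk₁ y hy, smul_zero]
    have hz' : g ^ (k₁ + k₂) • z = 0 := by rw [pow_add, mul_smul, hk₂ z hz, smul_zero]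
    rw [smul_add, hy', hz', add_zero]

theorem exists_apply_eq_zero_of_mem_span_pow {R Q : Type*} [CommRing R] [IsNoetherianRing R]
    [AddCommGroup Q] [Module R Q] (g : R) {I : Ideal R} (f : I →ₗ[R] Q) {N : ℕ}
    (hN : ∀ x, g ^ N • f x = 0) :
    ∃ M, N ≤ M ∧ ∀ x : I, (x : R) ∈ Ideal.span {g ^ M} → f x = 0 := by
  obtain ⟨k, hk⟩ := Ideal.exists_pow_inf_eq_pow_smul (Ideal.span {g}) (I : Submodule R R)
  refine ⟨N + k, Nat.le_add_right N k, fun x hx => ?_⟩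
  have hmem : (x : R) ∈ Ideal.span {g} ^ (N + k) • ⊤ ⊓ (I : Submodule R R) :=
    ⟨by rwa [smul_eq_mul, Ideal.mul_top, Ideal.span_singleton_pow], x.2⟩
  rw [hk (N + k) (Nat.le_add_left k N), Nat.add_sub_cancel] at hmem
  have hker : Ideal.span {g} ^ N • (I : Submodule R R) ≤ (LinearMap.ker f).map I.subtype := by
    refine Submodule.smul_le.mpr fun r hr a ha => ?_
    obtain ⟨t, rfl⟩ := Ideal.mem_span_singleton'.mp (Ideal.span_singleton_pow g N ▸ hr)
    refine ⟨(t * g ^ N) • ⟨a, ha⟩, ?_, rfl⟩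
    rw [SetLike.mem_coe, LinearMap.mem_ker, map_smul, mul_smul, hN, smul_zero]
  obtain ⟨y, hy, hyx⟩ := hker (Submodule.smul_mono le_rfl inf_le_right hmem)
  rwa [← Subtype.ext hyx]

theorem Polynomial.Monic.exists_bijective_compr₂_mul {A : Type*} [CommRing A] {h : A[X]}
    (hh : h.Monic) :
    ∃ lam : (A[X] ⧸ Ideal.span {h}) →ₗ[A] A,
      Function.Bijective ((LinearMap.mul A (A[X] ⧸ Ideal.span {h})).compr₂ lam) := by
  classical
  let adj := AdjoinRoot.isAdjoinRootMonic h hh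
  let lam := lcoeff A (h.natDegree - 1) ∘ₗ adj.modByMonicHom
  let P := LinearMap.toMatrix adj.basis adj.basis.dualBasis ((LinearMap.mul A _).compr₂ lam)
  -- `P` is a Hankel matrix; reversing its columns makes it lower unitriangular
  have hP (i j : Fin h.natDegree) (hij : i ≤ j) : P i j.rev = if i = j then 1 else 0 := by
    have hlt : (j.rev + i : ℕ) < h.natDegree := by have := j.isLt; rw [Fin.val_rev]; omega
    simp only [P, LinearMap.toMatrix_apply, Module.Basis.dualBasis_repr, LinearMap.compr₂_apply,
      LinearMap.mul_apply', IsAdjoinRootMonic.basis_apply, ← pow_add, lam, LinearMap.comp_apply]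
    rw [adj.modByMonicHom_root_pow hlt, lcoeff_apply, coeff_X_pow]
    refine if_congr ?_ rfl rfl
    rw [Fin.ext_iff, Fin.val_rev]
    omega
  have hdet : (P.submatrix id Fin.revPerm).det = 1 := by
    refine (Matrix.det_of_isLowerTriangular _ fun i j hij => ?_).trans ?_
    · have hij : i < j := hij
      simpa [hij.ne] using hP i j hij.le
    · simp [hP]
  have hPdet : IsUnit P.det :=
    isUnit_of_mul_isUnit_right (Matrix.det_permute' Fin.revPerm P ▸ hdet ▸ isUnit_one)
  exact ⟨lam, (LinearEquiv.ofIsUnitDet hPdet).bijective⟩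

theorem exists_smul_eq_of_bijective_compr₂_mul {A R : Type u} [CommRing A] [CommRing R]
    [Algebra A R] [Module.Injective A A] {J : Ideal R} {lam : (R ⧸ J) →ₗ[A] A}
    (hlam : Function.Bijective ((LinearMap.mul A (R ⧸ J)).compr₂ lam)) {I : Ideal R}
    (φ : I →ₗ[R] R ⧸ J) (hφ : ∀ x : I, (x : R) ∈ J → φ x = 0) :
    ∃ e : R ⧸ J, ∀ x : I, φ x = (x : R) • e := by
  let ι : I →ₗ[A] R ⧸ J := (J.mkQ ∘ₗ I.subtype).restrictScalars A
  obtain ⟨G, hG⟩ := Module.Injective.exists_comp_eq_of_ker_le ι (lam ∘ₗ φ.restrictScalars A)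
    fun x hx => by
      have hxJ : (x : R) ∈ J := by simpa [ι, Ideal.Quotient.eq_zero_iff_mem] using hx
      simp [hφ x hxJ]
  obtain ⟨e, rfl⟩ := hlam.2 G
  refine ⟨e, fun x => hlam.1 (LinearMap.ext fun c => ?_)⟩
  obtain ⟨r, rfl⟩ := Ideal.Quotient.mk_surjective c
  have hx := LinearMap.congr_fun hG (r • x)
  simp only [ι, LinearMap.comp_apply, LinearMap.compr₂_apply, LinearMap.mul_apply',
    LinearMap.restrictScalars_apply, map_smul, Algebra.smul_def, Ideal.Quotient.algebraMap_eq,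
    Submodule.subtype_apply, Submodule.mkQ_apply, ← Ideal.Quotient.mk_eq_mk] at hx ⊢
  rw [mul_comm (φ x), ← hx]
  congr 1
  ring

abbrev AwayQuotient {R : Type*} [CommRing R] (g : R) : Type _ :=
  Localization.Away g ⧸ LinearMap.range (Algebra.linearMap R (Localization.Away g))

namespace AwayQuotient

variable {R : Type*} [CommRing R] {g : R}

theorem exists_pow_smul_eq_zero (x : AwayQuotient g) : ∃ k, g ^ k • x = 0 := by
  obtain ⟨y, rfl⟩ := Submodule.Quotient.mk_surjective _ x
  obtain ⟨k, r, hr⟩ := IsLocalization.Away.surj g y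
  refine ⟨k, ?_⟩
  rw [← Submodule.Quotient.mk_smul, Submodule.Quotient.mk_eq_zero]
  exact ⟨r, by rw [Algebra.linearMap_apply, Algebra.smul_def, map_pow, mul_comm, hr]⟩

variable (g) in
noncomputable def divPow (M : ℕ) : R →ₗ[R] AwayQuotient g :=
  Submodule.mkQ _ ∘ₗ LinearMap.toSpanSingleton R _ (IsLocalization.Away.invSelf g ^ M)

theorem ker_divPow (hg : g ∈ nonZeroDivisors R) (M : ℕ) :
    LinearMap.ker (divPow g M) = Ideal.span {g ^ M} := by
  have hinv := IsLocalization.Away.mul_invSelf (S := Localization.Away g) g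
  ext r
  simp only [divPow, LinearMap.mem_ker, LinearMap.comp_apply, LinearMap.toSpanSingleton_apply,
    Submodule.mkQ_apply, Submodule.Quotient.mk_eq_zero, LinearMap.mem_range,
    Algebra.linearMap_apply, Ideal.mem_span_singleton']
  constructor
  · rintro ⟨t, ht⟩
    refine ⟨t, IsLocalization.injective (Localization.Away g) (Submonoid.powers_le.mpr hg) ?_⟩
    rw [map_mul, ht, map_pow, Algebra.smul_def, mul_assoc, ← mul_pow, mul_comm _ (algebraMap R _ g),
      hinv, one_pow, mul_one]
  · rintro ⟨t, rfl⟩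
    refine ⟨t, ?_⟩
    rw [Algebra.smul_def, map_mul, map_pow, mul_assoc, ← mul_pow, hinv, one_pow, mul_one]

theorem mem_range_divPow {M : ℕ} {x : AwayQuotient g} (hx : g ^ M • x = 0) :
    x ∈ LinearMap.range (divPow g M) := by
  have hinv := IsLocalization.Away.mul_invSelf (S := Localization.Away g) g
  obtain ⟨y, rfl⟩ := Submodule.Quotient.mk_surjective _ x
  rw [← Submodule.Quotient.mk_smul, Submodule.Quotient.mk_eq_zero] at hx
  obtain ⟨t, ht⟩ := hx
  refine ⟨t, congrArg (Submodule.Quotient.mk (p := LinearMap.range _)) ?_⟩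
  rw [Algebra.linearMap_apply] at ht
  rw [LinearMap.toSpanSingleton_apply, Algebra.smul_def, ht, Algebra.smul_def, map_pow,
    mul_right_comm, ← mul_pow, hinv, one_pow, one_mul]

end AwayQuotient

theorem AwayQuotient.injective_of_monic {A : Type u} [CommRing A] [IsNoetherianRing A]
    [Module.Injective A A] {g : A[X]} (hg : g.Monic) : Module.Injective A[X] (AwayQuotient g) := by
  refine Module.Baer.injective fun I f => ?_
  obtain ⟨N, hN⟩ :=
    (Submodule.fg_range f).exists_pow_smul_eq_zero fun x _ => exists_pow_smul_eq_zero x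
  obtain ⟨M, hNM, hM⟩ := exists_apply_eq_zero_of_mem_span_pow g f fun x => hN _ ⟨x, rfl⟩
  have hker := ker_divPow hg.mem_nonZeroDivisors M
  -- `A[X] ⧸ (g ^ M)` embeds into `AwayQuotient g` as its `g ^ M`-torsion, which contains `range f`
  let ρ := (Ideal.span {g ^ M}).liftQ (divPow g M) hker.ge
  have hρ : Function.Injective ρ :=
    LinearMap.ker_eq_bot.mp (Submodule.ker_liftQ_eq_bot' _ _ hker.symm)
  obtain ⟨φ, rfl⟩ := LinearMap.exists_comp_eq_of_range_le hρ <| by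
    rintro _ ⟨y, rfl⟩
    rw [Submodule.range_liftQ]
    refine mem_range_divPow ?_
    rw [← Nat.sub_add_cancel hNM, pow_add, mul_smul, hN _ ⟨y, rfl⟩, smul_zero]
  obtain ⟨lam, hlam⟩ := (hg.pow M).exists_bijective_compr₂_mul
  obtain ⟨e, he⟩ := exists_smul_eq_of_bijective_compr₂_mul hlam φ fun x hx =>
    hρ (by rw [map_zero]; exact hM x hx)
  exact ⟨LinearMap.toSpanSingleton _ _ (ρ e), fun x hx => by
    rw [LinearMap.toSpanSingleton_apply, LinearMap.comp_apply, he, map_smul]⟩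

theorem stmt_12_general (p n : ℕ) (hp : p.Prime)
    (g : Polynomial (ZMod (p ^ n))) (hg : g.Monic) :
    Module.Injective (Polynomial (ZMod (p ^ n)))
      ((Localization.Away g) ⧸
        (LinearMap.range
          (Algebra.linearMap (Polynomial (ZMod (p ^ n))) (Localization.Away g)))) ∧
    ∀ x : (Localization.Away g) ⧸
        (LinearMap.range
          (Algebra.linearMap (Polynomial (ZMod (p ^ n))) (Localization.Away g))),
      ∃ k : ℕ, 0 < k ∧ g ^ k • x = 0 := by
  have : NeZero (p ^ n) := ⟨pow_ne_zero n hp.ne_zero⟩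
  refine ⟨AwayQuotient.injective_of_monic hg, fun x => ?_⟩
  obtain ⟨k, hk⟩ := AwayQuotient.exists_pow_smul_eq_zero x
  exact ⟨k + 1, k.succ_pos, by rw [pow_succ', mul_smul, hk, smul_zero]⟩

/-- For `R = (ℤ/pⁿℤ)[X]` and a monic polynomial `g` whose reduction mod `p` is
irreducible, the `R`-module `E = R[1/g]/R` is injective, and every element of `E`
is annihilated by a positive power of `g`. -/
theorem stmt_12 (p n : ℕ) (hp : p.Prime) (hn : 1 ≤ n)
    (g : Polynomial (ZMod (p ^ n))) (hg : g.Monic)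
    (hirr : Irreducible
      (g.map (ZMod.castHom (dvd_pow_self p (Nat.one_le_iff_ne_zero.mp hn)) (ZMod p)))) :
    Module.Injective (Polynomial (ZMod (p ^ n)))
      ((Localization.Away g) ⧸
        (LinearMap.range
          (Algebra.linearMap (Polynomial (ZMod (p ^ n))) (Localization.Away g)))) ∧
    ∀ x : (Localization.Away g) ⧸
        (LinearMap.range
          (Algebra.linearMap (Polynomial (ZMod (p ^ n))) (Localization.Away g))),
      ∃ k : ℕ, 0 < k ∧ g ^ k • x = 0 :=
  stmt_12_general p n hp g hg
end

section
/- Let $p$ be a prime, $n \geq 1$ an integer, $R = (\mathbf{Z}/p^n\mathbf{Z})[X]$, and let $S \subseteq R$ be the multiplicative set of monic polynomials. Then the localization $S^{-1}R$, regarded as an $R$-module, is an injective $R$-module, and the localization map $R \to S^{-1}R$ is injective. -/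
/-!
Write `T` for the localization of `(ℤ/pⁿ)[X]` at the monic polynomials. Monic polynomials are
nonzerodivisors, so `(ℤ/pⁿ)[X] → T` is injective. A polynomial whose leading coefficient is a
unit becomes a unit in `T`; peeling off leading coefficients divisible by the nilpotent `p`
shows that every element of `T` is a unit or a multiple of `p`. Hence every element of `T` is
`pʲ` times a unit, the ideals of `T` are the `(pᵏ)` with `k ≤ n`, and the annihilator of `pⁿ⁻ᵏ`
is `(pᵏ)`: this is exactly Baer's criterion for `T` over itself. Finally a module over `S⁻¹R`
satisfying Baer's criterion over `S⁻¹R` satisfies it over `R`, because an `R`-linear map on an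
ideal `I` extends uniquely to `S⁻¹I`.
-/

/-- The multiplicative submonoid of monic polynomials over a commutative ring. -/
def monicSubmonoid (R : Type*) [CommRing R] : Submonoid (Polynomial R) where
  carrier := {f | f.Monic}
  mul_mem' := fun ha hb => Polynomial.Monic.mul ha hb
  one_mem' := Polynomial.monic_one

open Polynomial

theorem Module.Baer.of_isLocalization {R A M : Type*} [CommRing R] [CommRing A] [Algebra R A]
    (S : Submonoid R) [IsLocalization S A] [AddCommGroup M] [Module R M] [Module A M]
    [IsScalarTower R A M] (h : Module.Baer A M) : Module.Baer R M := by
  intro I g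
  have hS := (isLocalizedModule_id S M A).map_units
  let i := I.toLocalized' A S (Algebra.linearMap R A)
  obtain ⟨e, he⟩ := h _ ((IsLocalizedModule.lift S i g hS).extendScalarsOfIsLocalization S A)
  exact ⟨e.restrictScalars R ∘ₗ Algebra.linearMap R A, fun x hx ↦
    (he _ (i ⟨x, hx⟩).2).trans (IsLocalizedModule.lift_apply S i g hS _)⟩

section NilpotentGenerator

variable {T : Type*} [CommRing T] {π : T} (hπ : ∀ t : T, IsUnit t ∨ π ∣ t)
include hπ

theorem exists_eq_pow_mul_of_isUnit_or_dvd {n : ℕ} (hn : π ^ n = 0) (t : T) :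
    ∃ j u, IsUnit u ∧ t = π ^ j * u := by
  suffices ∀ N, (∃ j u, IsUnit u ∧ t = π ^ j * u) ∨ π ^ N ∣ t by
    rcases this n with h | ⟨w, rfl⟩
    · exact h
    · exact ⟨n, 1, isUnit_one, by rw [hn, zero_mul, zero_mul]⟩
  intro N
  induction N with
  | zero => exact .inr (pow_zero π ▸ one_dvd t)
  | succ N ih =>
    rcases ih with h | ⟨w, rfl⟩
    · exact .inl h
    rcases hπ w with hw | ⟨v, rfl⟩
    · exact .inl ⟨N, w, hw, rfl⟩
    · exact .inr ⟨v, by ring⟩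

theorem Ideal.exists_eq_span_pow_of_isUnit_or_dvd {n : ℕ} (hn : π ^ n = 0) (J : Ideal T) :
    ∃ k ≤ n, J = Ideal.span {π ^ k} := by
  classical
  have hex : ∃ k, π ^ k ∈ J := ⟨n, hn ▸ J.zero_mem⟩
  refine ⟨Nat.find hex, Nat.find_min' hex (hn ▸ J.zero_mem), le_antisymm (fun t ht ↦ ?_) ?_⟩
  · obtain ⟨j, u, hu, rfl⟩ := exists_eq_pow_mul_of_isUnit_or_dvd hπ hn t
    have hj : π ^ j ∈ J := (J.mul_unit_mem_iff_mem hu).mp ht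
    rw [Ideal.mem_span_singleton]
    exact (pow_dvd_pow π (Nat.find_min' hex hj)).mul_right u
  · exact Ideal.span_le.mpr (Set.singleton_subset_iff.mpr (Nat.find_spec hex))

variable {n : ℕ} (hn : ∀ m, π ^ m = 0 ↔ n ≤ m)
include hn

theorem pow_dvd_of_pow_sub_mul_eq_zero {k : ℕ} (hk : k ≤ n) {c : T}
    (hc : π ^ (n - k) * c = 0) : π ^ k ∣ c := by
  obtain ⟨j, u, hu, rfl⟩ := exists_eq_pow_mul_of_isUnit_or_dvd hπ ((hn n).mpr le_rfl) c
  have : n ≤ n - k + j := (hn _).mp <| by rwa [pow_add, ← hu.mul_left_eq_zero, mul_assoc]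
  exact (pow_dvd_pow π (by omega)).mul_right u

theorem Module.Baer.self_of_isUnit_or_dvd : Module.Baer T T := by
  intro J f
  obtain ⟨k, hk, rfl⟩ := Ideal.exists_eq_span_pow_of_isUnit_or_dvd hπ ((hn n).mpr le_rfl) J
  set g : Ideal.span {π ^ k} := ⟨π ^ k, Ideal.mem_span_singleton_self _⟩
  obtain ⟨d, hd⟩ : π ^ k ∣ f g := by
    refine pow_dvd_of_pow_sub_mul_eq_zero hπ hn hk ?_
    have : π ^ (n - k) • g = 0 :=
      Subtype.ext <| by simp [g, ← pow_add, Nat.sub_add_cancel hk, (hn n).mpr le_rfl]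
    rw [← smul_eq_mul, ← f.map_smul, this, map_zero]
  refine ⟨LinearMap.toSpanSingleton T T d, fun x hx ↦ ?_⟩
  obtain ⟨a, rfl⟩ := Ideal.mem_span_singleton'.mp hx
  have : (⟨a * π ^ k, hx⟩ : Ideal.span {π ^ k}) = a • g := rfl
  rw [this, f.map_smul, hd]
  simp [mul_assoc]

end NilpotentGenerator

theorem ZMod.isUnit_or_natCast_dvd {p : ℕ} (hp : p.Prime) (n : ℕ) (a : ZMod (p ^ n)) :
    IsUnit a ∨ (p : ZMod (p ^ n)) ∣ a := by
  have : NeZero (p ^ n) := ⟨pow_ne_zero n hp.ne_zero⟩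
  rw [← ZMod.natCast_zmod_val a, ZMod.isUnit_iff_coprime]
  exact (em (p ∣ a.val)).symm.imp
    (fun h ↦ ((hp.coprime_iff_not_dvd.mpr h).pow_left n).symm)
    (Nat.cast_dvd_cast ·)

theorem ZMod.natCast_pow_eq_zero_iff {p : ℕ} (hp : 1 < p) (n m : ℕ) :
    (p : ZMod (p ^ n)) ^ m = 0 ↔ n ≤ m := by
  rw [← Nat.cast_pow, ZMod.natCast_eq_zero_iff, Nat.pow_dvd_pow_iff_le_right hp]

theorem isUnit_or_dvd_add_mul {T : Type*} [CommRing T] {π x : T} (hπ : IsNilpotent π)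
    (hx : IsUnit x ∨ π ∣ x) (y : T) : IsUnit (x + π * y) ∨ π ∣ x + π * y :=
  hx.imp (fun hx ↦ ((Commute.all π y).isNilpotent_mul_right hπ).isUnit_add_left_of_commute hx
      (Commute.all _ _))
    (fun hx ↦ dvd_add hx (dvd_mul_right _ _))

namespace monicSubmonoid

variable {A : Type*} [CommRing A]

local notation "T" => Localization (monicSubmonoid A)

theorem le_nonZeroDivisors : monicSubmonoid A ≤ nonZeroDivisors A[X] :=
  fun _ ↦ Monic.mem_nonZeroDivisors

theorem algebraMap_localization_injective : Function.Injective (algebraMap A[X] T) :=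
  IsLocalization.injective _ le_nonZeroDivisors

theorem algebraMap_C_pow_eq_zero_iff (a : A) (m : ℕ) :
    algebraMap A[X] T (C a) ^ m = 0 ↔ a ^ m = 0 := by
  rw [← map_pow, ← map_pow, map_eq_zero_iff _ algebraMap_localization_injective, C_eq_zero]

variable {π : A} (hπ : ∀ a : A, IsUnit a ∨ π ∣ a) (hnil : IsNilpotent π)
include hπ hnil

theorem isUnit_or_dvd_algebraMap (r : A[X]) :
    IsUnit (algebraMap A[X] T r) ∨ algebraMap A[X] T (C π) ∣ algebraMap A[X] T r := by
  induction h : r.support.card generalizing r with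
  | zero => simp [card_support_eq_zero.mp h]
  | succ c ih =>
    rcases hπ r.leadingCoeff with ⟨u, hu⟩ | ⟨b, hb⟩
    · left
      have hmonic : (C (↑u⁻¹ : A) * r).Monic :=
        monic_C_mul_of_mul_leadingCoeff_eq_one (by simp [← hu])
      have : r = C (u : A) * (C (↑u⁻¹ : A) * r) := by simp [← mul_assoc, ← C_mul]
      rw [this, map_mul]
      exact ((u.isUnit.map C).map _).mul
        (IsLocalization.map_units (M := monicSubmonoid A) T ⟨_, hmonic⟩)
    · rw [← eraseLead_add_C_mul_X_pow r, hb, C_mul, mul_assoc, map_add, map_mul]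
      exact isUnit_or_dvd_add_mul ((hnil.map C).map _) (ih _ (card_support_eraseLead' h)) _

theorem isUnit_or_dvd_localization (t : T) : IsUnit t ∨ algebraMap A[X] T (C π) ∣ t := by
  obtain ⟨r, s, rfl⟩ := IsLocalization.exists_mk'_eq (monicSubmonoid A) t
  have hs : IsUnit (IsLocalization.mk' T (1 : A[X]) s) :=
    IsUnit.of_mul_eq_one _ (by rw [IsLocalization.mk'_spec, map_one])
  rw [IsLocalization.mk'_eq_mul_mk'_one]
  exact (isUnit_or_dvd_algebraMap hπ hnil r).imp (·.mul hs) (dvd_mul_of_dvd_left · _)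

end monicSubmonoid

theorem stmt_13_general (p n : ℕ) (hp : p.Prime) :
    Module.Injective (Polynomial (ZMod (p ^ n)))
      (Localization (monicSubmonoid (ZMod (p ^ n)))) ∧
    Function.Injective
      (algebraMap (Polynomial (ZMod (p ^ n)))
        (Localization (monicSubmonoid (ZMod (p ^ n))))) := by
  have hnil : ∀ m, algebraMap _ (Localization (monicSubmonoid (ZMod (p ^ n))))
      (C (p : ZMod (p ^ n))) ^ m = 0 ↔ n ≤ m := fun m ↦
    (monicSubmonoid.algebraMap_C_pow_eq_zero_iff _ m).trans
      (ZMod.natCast_pow_eq_zero_iff hp.one_lt n m)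
  have hunit := monicSubmonoid.isUnit_or_dvd_localization (ZMod.isUnit_or_natCast_dvd hp n)
    ⟨n, (ZMod.natCast_pow_eq_zero_iff hp.one_lt n n).mpr le_rfl⟩
  have hbaer := Module.Baer.self_of_isUnit_or_dvd hunit hnil
  exact ⟨(hbaer.of_isLocalization (monicSubmonoid _)).injective,
    monicSubmonoid.algebraMap_localization_injective⟩

/-- For `R = (ℤ/pⁿℤ)[X]` and `S` the multiplicative set of monic polynomials, the
localization `S⁻¹R` is an injective `R`-module, and the localization map `R → S⁻¹R`
is injective. -/
theorem stmt_13 (p n : ℕ) (hp : p.Prime) (hn : 1 ≤ n) :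
    Module.Injective (Polynomial (ZMod (p ^ n)))
      (Localization (monicSubmonoid (ZMod (p ^ n)))) ∧
    Function.Injective
      (algebraMap (Polynomial (ZMod (p ^ n)))
        (Localization (monicSubmonoid (ZMod (p ^ n))))) :=
  stmt_13_general p n hp
end

section
/- Let $p$ be a prime, $n \geq 1$ an integer, $R = (\mathbf{Z}/p^n\mathbf{Z})[X]$, and let $S \subseteq R$ be the multiplicative set of monic polynomials. Then $S^{-1}R$ is the total ring of fractions of $R$: every monic polynomial is a nonzerodivisor in $R$, and the canonical $R$-algebra map from $S^{-1}R$ to the localization of $R$ at the multiplicative set of all nonzerodivisors is an isomorphism (equivalently, every nonzerodivisor of $R$ becomes a unit in $S^{-1}R$). -/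
open IsLocalRing
open scoped nonZeroDivisors

namespace Polynomial

variable {A : Type*} [CommRing A]

theorem exists_monic_mul_sub_mem_map_sq (I : Ideal A) {t m : A[X]} (hm : m.Monic)
    (htm : t - m ∈ I.map C) : ∃ g m' : A[X], m'.Monic ∧ t * g - m' ∈ (I ^ 2).map C := by
  nontriviality A
  have hker : RingHom.ker (mapRingHom (Ideal.Quotient.mk I)) = I.map C := by
    rw [ker_mapRingHom, Ideal.mk_ker]
  have hmap : (t - m).map (Ideal.Quotient.mk I) = 0 := RingHom.mem_ker.1 (hker ▸ htm)
  have hq : (t - m) /ₘ m ∈ I.map C := by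
    rw [← hker, RingHom.mem_ker, coe_mapRingHom, map_divByMonic _ hm, hmap, zero_divByMonic]
  have hr : (t - m) %ₘ m ∈ I.map C := by
    rw [← hker, RingHom.mem_ker, coe_mapRingHom, map_modByMonic _ hm, hmap, zero_modByMonic]
  refine ⟨1 - (t - m) /ₘ m, m + (t - m) %ₘ m,
    hm.add_of_left (degree_modByMonic_lt _ hm), ?_⟩
  have hdiv := modByMonic_add_div (t - m) m
  generalize (t - m) /ₘ m = q at hq hdiv ⊢
  generalize (t - m) %ₘ m = r at hr hdiv ⊢
  have herror : t * (1 - q) - (m + r) = -(m * (q * q) + r * q) := by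
    linear_combination (q - 1) * hdiv
  rw [herror, Ideal.map_pow, sq]
  exact neg_mem (add_mem (Ideal.mul_mem_left _ _ (Ideal.mul_mem_mul hq hq))
    (Ideal.mul_mem_mul hr hq))

theorem exists_monic_mul_sub_mem_map_pow_two_pow (I : Ideal A) {t m : A[X]} (hm : m.Monic)
    (htm : t - m ∈ I.map C) (k : ℕ) :
    ∃ g m' : A[X], m'.Monic ∧ t * g - m' ∈ (I ^ 2 ^ k).map C := by
  induction k with
  | zero => exact ⟨1, m, hm, by simpa using htm⟩
  | succ k ih =>
    obtain ⟨g, m', hm', h⟩ := ih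
    obtain ⟨g', m'', hm'', h'⟩ := exists_monic_mul_sub_mem_map_sq _ hm' h
    exact ⟨g * g', m'', hm'', by rwa [pow_succ, pow_mul, ← mul_assoc]⟩

theorem exists_monic_mul_of_sub_mem_map {I : Ideal A} (hI : IsNilpotent I) {t m : A[X]}
    (hm : m.Monic) (htm : t - m ∈ I.map C) : ∃ g : A[X], (t * g).Monic := by
  obtain ⟨N, hN⟩ := hI
  obtain ⟨g, m', hm', h⟩ := exists_monic_mul_sub_mem_map_pow_two_pow I hm htm N
  have hbot : I ^ 2 ^ N = ⊥ :=
    le_bot_iff.1 ((Ideal.pow_le_pow_right N.lt_two_pow_self.le).trans hN.le)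
  rw [hbot, Ideal.map_bot, Ideal.mem_bot, sub_eq_zero] at h
  exact ⟨g, h ▸ hm'⟩

theorem notMem_map_C_of_mem_nonZeroDivisors [Nontrivial A] {I : Ideal A} (hI : IsNilpotent I)
    {f : A[X]} (hf : f ∈ A[X]⁰) : f ∉ I.map C := by
  obtain ⟨N, hN⟩ := hI
  intro hfI
  have hnil : IsNilpotent f := Polynomial.isNilpotent_iff.2 fun i =>
    ⟨N, by simpa [hN] using Ideal.pow_mem_pow (Ideal.mem_map_C_iff.1 hfI i) N⟩
  obtain ⟨k, hk⟩ := hnil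
  exact nonZeroDivisors.ne_zero (pow_mem hf k) hk

variable [IsLocalRing A]

theorem exists_monic_mul_of_notMem_map_C_maximalIdeal (hA : IsNilpotent (maximalIdeal A))
    {t : A[X]} (ht : t ∉ (maximalIdeal A).map C) : ∃ g : A[X], (t * g).Monic := by
  rw [← ker_residue, ← ker_mapRingHom, RingHom.mem_ker, coe_mapRingHom] at ht
  obtain ⟨a, ha⟩ := residue_surjective (t.map (residue A)).leadingCoeff⁻¹
  have hmonic : ((t * C a).map (residue A)).Monic := by
    rw [Polynomial.map_mul, map_C, ha]
    exact monic_mul_leadingCoeff_inv ht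
  obtain ⟨m, hmap, -, hm⟩ := lifts_and_degree_eq_and_monic ⟨t * C a, rfl⟩ hmonic
  have htm : t * C a - m ∈ (maximalIdeal A).map C := by
    rw [← ker_residue, ← ker_mapRingHom, RingHom.mem_ker, map_sub, coe_mapRingHom, hmap,
      coe_mapRingHom, sub_self]
  obtain ⟨g, hg⟩ := exists_monic_mul_of_sub_mem_map hA hm htm
  exact ⟨C a * g, by rwa [← mul_assoc]⟩

theorem isFractionRing_localization_monicSubmonoid (hA : IsNilpotent (maximalIdeal A)) :
    IsFractionRing A[X] (Localization (monicSubmonoid A)) :=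
  IsLocalization.of_le_of_exists_dvd (monicSubmonoid A) A[X]⁰
    (fun _ hf => Monic.mem_nonZeroDivisors hf) fun f hf =>
      let ⟨g, hg⟩ := exists_monic_mul_of_notMem_map_C_maximalIdeal hA
        (notMem_map_C_of_mem_nonZeroDivisors hA hf)
      ⟨f * g, hg, dvd_mul_right f g⟩

end Polynomial

theorem ZMod.isLocalRing_prime_pow (p : ℕ) [Fact p.Prime] {n : ℕ} (hn : 0 < n) :
    IsLocalRing (ZMod (p ^ n)) :=
  have : Nontrivial (ZMod (p ^ n)) :=
    ZMod.nontrivial_iff.2 (Nat.one_lt_pow hn.ne' (Fact.out : p.Prime).one_lt).ne'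
  IsLocalRing.of_surjective' (PadicInt.toZModPow n) (ZMod.ringHom_surjective _)

/-- For `R = (ℤ/pⁿℤ)[X]` and `S` the monic polynomials: every monic polynomial is a
nonzerodivisor in `R`, and `S⁻¹R` is the total ring of fractions of `R`, i.e. `S⁻¹R`
is the localization of `R` at the multiplicative set of all nonzerodivisors
(equivalently, every nonzerodivisor of `R` becomes a unit in `S⁻¹R`). -/
theorem stmt_14 (p n : ℕ) (hp : p.Prime) (hn : 1 ≤ n) :
    (∀ g : Polynomial (ZMod (p ^ n)),
      g.Monic → g ∈ nonZeroDivisors (Polynomial (ZMod (p ^ n)))) ∧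
    IsFractionRing (Polynomial (ZMod (p ^ n)))
      (Localization (monicSubmonoid (ZMod (p ^ n)))) := by
  have : Fact p.Prime := ⟨hp⟩
  have : NeZero (p ^ n) := ⟨pow_ne_zero n hp.ne_zero⟩
  have := ZMod.isLocalRing_prime_pow p hn
  exact ⟨fun _ hg => hg.mem_nonZeroDivisors, Polynomial.isFractionRing_localization_monicSubmonoid
    ((isArtinianRing_iff_isNilpotent_maximalIdeal _).1 inferInstance)⟩
end
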